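/- In the 1-channel Markov system, the active-state probability P₁ = p₁⁰ + p₀¹ satisfies P₁ = [ (F_p/F)·μ₁/(λ + 1/T) + (F_s/F)·μ₁·T ] / [ 1 + (F_p/F)·μ₁/(λ + 1/T) + (F_s/F)·μ₁·T ], and 0 < P₁ < 1. -/

import Mathlib

/-- Active-state probability of the 1-channel Markov system. -/
theorem one_channel_active_probability
    (lam mu T Fp Fs F p00 p01 p10 : ℝ)
    (hlam : 0 < lam) (hmu : 0 < mu) (hT : 0 < T) (hFp : 0 < Fp) (hFs : 0 < Fs)
    (hF : F = Fp + Fs)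
    (hbal1 : (lam + 1 / T) * p01 = (Fp / F) * mu * p00)
    (hbal2 : (1 / T) * p10 = (Fs / F) * mu * p00)
    (hnorm : p00 + p01 + p10 = 1) :
    p10 + p01 =
      ((Fp / F) * mu / (lam + 1 / T) + (Fs / F) * mu * T) /
        (1 + (Fp / F) * mu / (lam + 1 / T) + (Fs / F) * mu * T) ∧
    0 < p10 + p01 ∧ p10 + p01 < 1 := by
  have hFpos : 0 < F := by rw [hF]; linarith
  have hL : 0 < lam + 1 / T := by positivity
  set A : ℝ := (Fp / F) * mu / (lam + 1 / T) with hA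
  set B : ℝ := (Fs / F) * mu * T with hB
  have hApos : 0 < A := by positivity
  have hBpos : 0 < B := by positivity
  have h01 : p01 = A * p00 := by
    rw [hA, div_mul_eq_mul_div, eq_div_iff hL.ne']
    linear_combination hbal1
  have h10 : p10 = B * p00 := by
    rw [hB]
    field_simp at hbal2 ⊢
    linear_combination hbal2
  have hden : 0 < 1 + A + B := by linarith
  have h00 : p00 = 1 / (1 + A + B) := by
    rw [h01, h10] at hnorm
    field_simp
    linarith
  have h00pos : 0 < p00 := by rw [h00]; positivity
  refine ⟨?_, ?_, ?_⟩
  · rw [h01, h10, h00]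
    field_simp
    ring
  · rw [h01, h10]; positivity
  · rw [h01, h10, h00]
    rw [mul_one_div, mul_one_div, ← add_div, div_lt_one hden]
    linarith
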